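/- Let G be an r-regular finite simple graph with n vertices and m edges. Then NK(G^{+--}) = m^n · (m+n-2r-1)^m. -/

import Mathlib

open Finset

variable {V : Type*}

/-- The Narumi–Katayama index: the product of the degrees of all vertices. -/
def NK {W : Type*} [Fintype W] (H : SimpleGraph W) [DecidableRel H.Adj] : ℕ :=
  ∏ v, H.degree v

/-- The first Zagreb index: the sum of the squares of the degrees. -/
def M1 [Fintype V] (G : SimpleGraph V) [DecidableRel G.Adj] : ℕ :=
  ∑ v, (G.degree v) ^ 2

/-- The multiplicative sum Zagreb index: the product over the edges of `G` of the
sum of the degrees of the two endpoints. -/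
def Pi1Star [Fintype V] [DecidableEq V] (G : SimpleGraph V) [DecidableRel G.Adj] : ℕ :=
  ∏ e ∈ G.edgeFinset,
    Sym2.lift ⟨fun u v => G.degree u + G.degree v, fun u v => by simp [Nat.add_comm]⟩ e

/-- A generic transformation graph on the vertex set `V(G) ∪ E(G)`, built from a
symmetric irreflexive relation `Rvv` between vertices, a symmetric irreflexive relation
`Ree` between edges, and an incidence relation `Rve` between vertices and edges. -/
def transGraph (G : SimpleGraph V) (Rvv : V → V → Prop) (Ree : Sym2 V → Sym2 V → Prop)
    (Rve : V → Sym2 V → Prop)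
    (hvv : Symmetric Rvv) (hvv' : Irreflexive Rvv)
    (hee : Symmetric Ree) (hee' : Irreflexive Ree) :
    SimpleGraph (V ⊕ G.edgeSet) where
  Adj a b :=
    match a, b with
    | Sum.inl u, Sum.inl v => Rvv u v
    | Sum.inr e, Sum.inr f => Ree e.1 f.1
    | Sum.inl u, Sum.inr e => Rve u e.1
    | Sum.inr e, Sum.inl u => Rve u e.1
  symm := by
    refine ⟨?_⟩
    rintro (u | e) (v | f) h
    · exact hvv h
    · exact h
    · exact h
    · exact hee h
  loopless := by
    refine ⟨?_⟩
    rintro (u | e) h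
    · exact hvv' u h
    · exact hee' e.1 h

instance transGraph.instDecidableAdj (G : SimpleGraph V) (Rvv : V → V → Prop)
    (Ree : Sym2 V → Sym2 V → Prop) (Rve : V → Sym2 V → Prop)
    (h1 : Symmetric Rvv) (h2 : Irreflexive Rvv) (h3 : Symmetric Ree) (h4 : Irreflexive Ree)
    [DecidableRel Rvv] [DecidableRel Ree] [∀ u e, Decidable (Rve u e)] :
    DecidableRel (transGraph G Rvv Ree Rve h1 h2 h3 h4).Adj := fun a b =>
  match a, b with
  | Sum.inl u, Sum.inl v => inferInstanceAs (Decidable (Rvv u v))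
  | Sum.inr e, Sum.inr f => inferInstanceAs (Decidable (Ree e.1 f.1))
  | Sum.inl u, Sum.inr e => inferInstanceAs (Decidable (Rve u e.1))
  | Sum.inr e, Sum.inl u => inferInstanceAs (Decidable (Rve u e.1))

/-- Two edges (as elements of `Sym2 V`) are adjacent: distinct and sharing an endpoint. -/
abbrev shareRel : Sym2 V → Sym2 V → Prop := fun e f => e ≠ f ∧ ∃ w, w ∈ e ∧ w ∈ f

lemma shareRel_symm : Symmetric (shareRel (V := V)) :=
  fun _ _ h => ⟨h.1.symm, h.2.imp fun _ hw => ⟨hw.2, hw.1⟩⟩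

lemma shareRel_irrefl : Irreflexive (shareRel (V := V)) := fun _ h => h.1 rfl

/-- Two edges are "non-adjacent": distinct and sharing no endpoint. -/
abbrev coshareRel : Sym2 V → Sym2 V → Prop := fun e f => e ≠ f ∧ ∀ w, w ∈ e → w ∉ f

lemma coshareRel_symm : Symmetric (coshareRel (V := V)) :=
  fun _ _ h => ⟨h.1.symm, fun w hf he => h.2 w he hf⟩

lemma coshareRel_irrefl : Irreflexive (coshareRel (V := V)) := fun _ h => h.1 rfl

/-- Non-adjacency of distinct vertices. -/
abbrev coAdj (G : SimpleGraph V) : V → V → Prop := fun u v => u ≠ v ∧ ¬ G.Adj u v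

lemma coAdj_symm (G : SimpleGraph V) : Symmetric (coAdj G) :=
  fun _ _ h => ⟨h.1.symm, fun ha => h.2 ha.symm⟩

lemma coAdj_irrefl (G : SimpleGraph V) : Irreflexive (coAdj G) := fun _ h => h.1 rfl

variable [Fintype V] [DecidableEq V]

/-- The total transformation graph `G^{+--}`. -/
abbrev Gpmm (G : SimpleGraph V) [DecidableRel G.Adj] : SimpleGraph (V ⊕ G.edgeSet) :=
  transGraph G G.Adj coshareRel (fun u e => u ∉ e)
    (show Symmetric G.Adj from fun _ _ h => G.adj_symm h)
    (show Irreflexive G.Adj from fun _ => G.irrefl) coshareRel_symm coshareRel_irrefl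

/-! In `G^{+--}` a vertex `u` is adjacent to its `deg u` neighbours and to the `m - deg u` edges
avoiding it, so it has degree `m`. An edge `ab` is adjacent to the `n - 2` vertices off it and to
the edges avoiding both `a` and `b`; since `ab` is the only edge at both endpoints, there are
`m - (deg a + deg b - 1)` of these, which is `m - 2r + 1` when `G` is `r`-regular. -/

section transGraph

omit [DecidableEq V]

variable (G : SimpleGraph V) [Fintype G.edgeSet] (Rvv : V → V → Prop)
  (Ree : Sym2 V → Sym2 V → Prop) (Rve : V → Sym2 V → Prop)
  (h1 : Symmetric Rvv) (h2 : Irreflexive Rvv) (h3 : Symmetric Ree) (h4 : Irreflexive Ree)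
  [DecidableRel Rvv] [DecidableRel Ree] [∀ u e, Decidable (Rve u e)]

theorem transGraph_degree_inl (u : V) :
    (transGraph G Rvv Ree Rve h1 h2 h3 h4).degree (Sum.inl u) =
      Fintype.card {v // Rvv u v} + Fintype.card {e : G.edgeSet // Rve u e} := by
  rw [← SimpleGraph.card_neighborSet_eq_degree]
  exact (Fintype.card_congr Equiv.subtypeSum).trans (Fintype.card_sum ..)

theorem transGraph_degree_inr (e : G.edgeSet) :
    (transGraph G Rvv Ree Rve h1 h2 h3 h4).degree (Sum.inr e) =
      Fintype.card {v // Rve v e} + Fintype.card {f : G.edgeSet // Ree e f} := by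
  rw [← SimpleGraph.card_neighborSet_eq_degree]
  exact (Fintype.card_congr Equiv.subtypeSum).trans (Fintype.card_sum ..)

end transGraph

theorem Sym2.card_subtype_not_mem_add_two {e : Sym2 V} (he : ¬e.IsDiag) :
    Fintype.card {v // v ∉ e} + 2 = Fintype.card V := by
  have hmem : Fintype.card {v // v ∈ e} = 2 := by
    rw [← Sym2.card_toFinset_of_not_isDiag e he, Fintype.card_subtype]
    congr 1
    ext; simp [Sym2.mem_toFinset]
  rw [Fintype.card_subtype_compl, hmem]
  have : Fintype.card {v // v ∈ e} ≤ Fintype.card V := Fintype.card_subtype_le _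
  omega

omit [Fintype V] [DecidableEq V] in
theorem coshareRel_mk_iff {a b : V} {f : Sym2 V} :
    coshareRel s(a, b) f ↔ ¬(a ∈ f ∨ b ∈ f) := by
  constructor
  · rintro ⟨-, hdisj⟩ (ha | hb)
    exact hdisj a (Sym2.mem_mk_left a b) ha
    exact hdisj b (Sym2.mem_mk_right a b) hb
  · intro h
    refine ⟨fun heq => h (.inl (heq ▸ Sym2.mem_mk_left a b)), fun w hw hwf => ?_⟩
    rcases Sym2.mem_iff.1 hw with rfl | rfl
    exacts [h (.inl hwf), h (.inr hwf)]

namespace SimpleGraph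

variable (G : SimpleGraph V) [DecidableRel G.Adj]

omit [DecidableEq V] in
theorem card_edgeSet_subtype (p : Sym2 V → Prop) [DecidablePred p] :
    Fintype.card {e : G.edgeSet // p e} = #{e ∈ G.edgeFinset | p e} := by
  rw [Fintype.card_congr (Equiv.subtypeSubtypeEquivSubtypeInter (· ∈ G.edgeSet) p),
    Fintype.card_subtype, ← filter_filter]
  congr 1
  ext; simp

theorem card_filter_not_mem_edgeFinset_add_degree (u : V) :
    #{e ∈ G.edgeFinset | u ∉ e} + G.degree u = #G.edgeFinset := by
  rw [← card_incidenceFinset_eq_degree, incidenceFinset_eq_filter, add_comm,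
    card_filter_add_card_filter_not]

theorem card_filter_mem_or_mem_edgeFinset_add_one {a b : V} (hab : G.Adj a b) :
    #{e ∈ G.edgeFinset | a ∈ e ∨ b ∈ e} + 1 = G.degree a + G.degree b := by
  have hinter : G.incidenceFinset a ∩ G.incidenceFinset b = {s(a, b)} := by
    ext; simp [← Set.mem_inter_iff, G.incidenceSet_inter_incidenceSet_of_adj hab]
  rw [filter_or, ← incidenceFinset_eq_filter, ← incidenceFinset_eq_filter,
    ← card_incidenceFinset_eq_degree, ← card_incidenceFinset_eq_degree, ← card_union_add_card_inter, hinter, card_singleton]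

theorem card_filter_coshareRel_add_degree_add_degree {a b : V} (hab : G.Adj a b) :
    #{f ∈ G.edgeFinset | coshareRel s(a, b) f} + G.degree a + G.degree b =
      #G.edgeFinset + 1 := by
  simp only [coshareRel_mk_iff]
  rw [add_assoc, ← G.card_filter_mem_or_mem_edgeFinset_add_one hab, ← add_assoc, add_comm (#_),
    card_filter_add_card_filter_not]

end SimpleGraph

section Gpmm

variable (G : SimpleGraph V) [DecidableRel G.Adj]

theorem Gpmm_degree_inl (u : V) : (Gpmm G).degree (.inl u) = #G.edgeFinset := by
  rw [transGraph_degree_inl, G.card_edgeSet_subtype (u ∉ ·),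
    ← G.card_filter_not_mem_edgeFinset_add_degree u, add_comm]
  congr 1
  exact G.card_neighborSet_eq_degree u

theorem Gpmm_degree_inr_add {a b : V} (hab : s(a, b) ∈ G.edgeSet) :
    (Gpmm G).degree (.inr ⟨s(a, b), hab⟩) + G.degree a + G.degree b + 1 =
      #G.edgeFinset + Fintype.card V := by
  rw [transGraph_degree_inr, G.card_edgeSet_subtype (coshareRel s(a, b))]
  dsimp only
  have hV := Sym2.card_subtype_not_mem_add_two (G.not_isDiag_of_mem_edgeSet hab)
  have hE := G.card_filter_coshareRel_add_degree_add_degree (G.mem_edgeSet.1 hab)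
  omega

theorem Gpmm_degree_inr_of_isRegularOfDegree {r : ℕ} (hreg : G.IsRegularOfDegree r)
    (e : G.edgeSet) :
    (Gpmm G).degree (.inr e) = #G.edgeFinset + Fintype.card V - 2 * r - 1 := by
  obtain ⟨e, he⟩ := e
  induction e using Sym2.ind with
  | _ a b =>
    have := Gpmm_degree_inr_add G he
    rw [hreg a, hreg b] at this
    omega

end Gpmm

theorem stmt_15 (G : SimpleGraph V) [DecidableRel G.Adj]
    (r : ℕ)
    (hreg : G.IsRegularOfDegree r) :
    NK (Gpmm G) = G.edgeFinset.card ^ Fintype.card V * (G.edgeFinset.card + Fintype.card V - 2 * r - 1) ^ G.edgeFinset.card := by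
  rw [NK, Fintype.prod_sum_type]
  simp only [Gpmm_degree_inl, Gpmm_degree_inr_of_isRegularOfDegree G hreg, prod_const,
    card_univ, SimpleGraph.edgeFinset_card]
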